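/- Let (E, ‖·‖) be a two-dimensional real normed vector space and let y₀, y₁, …, y₅ ∈ E (indexed cyclically modulo 6) satisfy: ‖y_i‖ = 1 for every i, ‖y_{i+1} − y_i‖ = 1 for every i, y_{i+3} = −y_i for every i, and every vector of E lies in cone(y_i, y_{i+1}) for some i. Let X be a finite nonempty set of points of E and let s ∈ E with s ∉ X. Then there exists a minimum spanning tree T on X ∪ {s} with the following property: for each i = 0, …, 5, there is at most one point x ∈ X adjacent to s in T with x − s ∈ cone(y_i, y_{i+1}), and any such x satisfies ‖x − s‖ ≤ ‖x′ − s‖ for every x′ ∈ X with x′ − s ∈ cone(y_i, y_{i+1}). -/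

import Mathlib

open scoped Classical

/-- The length of an edge `{u, v}` between points of `X`, namely `‖u − v‖`. -/
noncomputable def edgeLen {E : Type*} [NormedAddCommGroup E] {X : Finset E}
    (e : Sym2 {x // x ∈ X}) : ℝ :=
  Sym2.lift ⟨fun u v : {x // x ∈ X} => ‖(u : E) - (v : E)‖, fun u v => norm_sub_rev _ _⟩ e

/-- The length of a graph on the points of `X`: the sum of the lengths of its edges. -/
noncomputable def graphLen {E : Type*} [NormedAddCommGroup E] {X : Finset E}
    (G : SimpleGraph {x // x ∈ X}) : ℝ :=
  ∑ e ∈ G.edgeFinset, edgeLen e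

/-- A minimum spanning tree on a finite set `X` of points: a spanning tree (connected and
acyclic graph on `X`) of minimum total length. -/
def IsMST {E : Type*} [NormedAddCommGroup E] {X : Finset E}
    (G : SimpleGraph {x // x ∈ X}) : Prop :=
  G.IsTree ∧ ∀ G' : SimpleGraph {x // x ∈ X}, G'.IsTree → graphLen G ≤ graphLen G'

/-- The cone generated by `a` and `b`: all non-negative combinations `α • a + β • b`. -/
def cone {E : Type*} [AddCommGroup E] [Module ℝ E] (a b : E) : Set E :=
  {w | ∃ α β : ℝ, 0 ≤ α ∧ 0 ≤ β ∧ w = α • a + β • b}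

/-!
Choose, among the minimum spanning trees, one of least degree at `s`. Inside a cone whose
generators `a`, `b` satisfy `‖a‖ = ‖b‖ = ‖b - a‖ = 1`, the difference of two vectors is never
longer than the longer of the two. Hence if two neighbours `x`, `x'` of `s` lie in one cone, with
`‖x - s‖ ≤ ‖x' - s‖`, the edge `sx'` can be exchanged for the no longer edge `xx'`, lowering the
degree at `s`. If a neighbour `x` is farther from `s` than some `x'` of its cone, then deleting
`sx` leaves `x'` on the side of `s`, and `sx` can be exchanged for `x'x`, or on the side of `x`,
and `sx` can be exchanged for the strictly shorter `sx'`.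
-/

section Geometry

variable {E : Type*} [NormedAddCommGroup E] [NormedSpace ℝ E] {a b : E}

-- `t ↦ ‖t • a + β • b‖` is convex and takes the value `β` at `t = -β` and at `t = 0`.
lemma le_norm_smul_add_smul (hb : ‖b‖ = 1) (hab : ‖b - a‖ = 1) {α β : ℝ} (hα : 0 ≤ α)
    (hβ : 0 ≤ β) : β ≤ ‖α • a + β • b‖ := by
  have key : (α + β) * β ≤ α * β + β * ‖α • a + β • b‖ := calc
    (α + β) * β = ‖(α + β) • β • b‖ := by
      rw [norm_smul_of_nonneg (by positivity), norm_smul_of_nonneg hβ, hb, mul_one]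
    _ = ‖(α * β) • (b - a) + β • (α • a + β • b)‖ := by congr 1; module
    _ ≤ α * β + β * ‖α • a + β • b‖ := by
      grw [norm_add_le, norm_smul_of_nonneg (by positivity), norm_smul_of_nonneg hβ, hab, mul_one]
  nlinarith [norm_nonneg (α • a + β • b)]

lemma norm_smul_add_smul_le_left (hb : ‖b‖ = 1) (hab : ‖b - a‖ = 1) {α α' β : ℝ}
    (hα : 0 ≤ α) (hαα' : α ≤ α') (hβ : 0 ≤ β) : ‖α • a + β • b‖ ≤ ‖α' • a + β • b‖ := by
  have hβw' := le_norm_smul_add_smul hb hab (hα.trans hαα') hβ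
  have key : α' * ‖α • a + β • b‖ ≤ α' * ‖α' • a + β • b‖ := calc
    α' * ‖α • a + β • b‖ = ‖α • (α' • a + β • b) + ((α' - α) * β) • b‖ := by
      rw [← norm_smul_of_nonneg (hα.trans hαα')]; congr 1; module
    _ ≤ α * ‖α' • a + β • b‖ + (α' - α) * β := by
      grw [norm_add_le, norm_smul_of_nonneg hα, norm_smul_of_nonneg (by nlinarith), hb, mul_one]
    _ ≤ α' * ‖α' • a + β • b‖ := by nlinarith
  obtain rfl | hα' := (hα.trans hαα').eq_or_lt
  · obtain rfl : α = 0 := le_antisymm hαα' hα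
    rfl
  · exact le_of_mul_le_mul_left key hα'

lemma norm_smul_add_smul_mono (ha : ‖a‖ = 1) (hb : ‖b‖ = 1) (hab : ‖b - a‖ = 1)
    {α α' β β' : ℝ} (hα : 0 ≤ α) (hαα' : α ≤ α') (hβ : 0 ≤ β) (hββ' : β ≤ β') :
    ‖α • a + β • b‖ ≤ ‖α' • a + β' • b‖ := calc
  ‖α • a + β • b‖ ≤ ‖α' • a + β • b‖ := norm_smul_add_smul_le_left hb hab hα hαα' hβ
  _ = ‖β • b + α' • a‖ := by rw [add_comm]
  _ ≤ ‖β' • b + α' • a‖ :=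
    norm_smul_add_smul_le_left ha (by rwa [norm_sub_rev]) hβ hββ' (hα.trans hαα')
  _ = ‖α' • a + β' • b‖ := by rw [add_comm]

lemma norm_smul_sub_smul_le_max (ha : ‖a‖ = 1) (hb : ‖b‖ = 1) (hab : ‖b - a‖ = 1) {p q : ℝ}
    (hp : 0 ≤ p) (hq : 0 ≤ q) : ‖p • a - q • b‖ ≤ max p q := by
  rcases le_total p q with hpq | hqp
  · calc ‖p • a - q • b‖ = ‖p • (a - b) - (q - p) • b‖ := by congr 1; module
      _ ≤ max p q := by
        grw [norm_sub_le, norm_smul_of_nonneg hp, norm_smul_of_nonneg (by linarith), hb,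
          norm_sub_rev, hab, ← le_max_right]
        linarith
  · calc ‖p • a - q • b‖ = ‖q • (a - b) + (p - q) • a‖ := by congr 1; module
      _ ≤ max p q := by
        grw [norm_add_le, norm_smul_of_nonneg hq, norm_smul_of_nonneg (by linarith), ha,
          norm_sub_rev, hab, ← le_max_left]
        linarith

lemma norm_sub_le_max_of_mem_cone (ha : ‖a‖ = 1) (hb : ‖b‖ = 1) (hab : ‖b - a‖ = 1) {u v : E}
    (hu : u ∈ cone a b) (hv : v ∈ cone a b) : ‖u - v‖ ≤ max ‖u‖ ‖v‖ := by
  obtain ⟨α, β, hα, hβ, rfl⟩ := hu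
  obtain ⟨γ, δ, hγ, hδ, rfl⟩ := hv
  wlog hγα : γ ≤ α generalizing α β γ δ
  · rw [norm_sub_rev, max_comm]
    exact this γ δ hγ hδ α β hα hβ (le_of_not_ge hγα)
  rcases le_total δ β with hδβ | hβδ
  · calc ‖α • a + β • b - (γ • a + δ • b)‖ = ‖(α - γ) • a + (β - δ) • b‖ := by congr 1; module
      _ ≤ ‖α • a + β • b‖ :=
        norm_smul_add_smul_mono ha hb hab (by linarith) (by linarith) (by linarith) (by linarith)
      _ ≤ _ := le_max_left _ _
  · have hαu : α ≤ ‖α • a + β • b‖ := by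
      rw [add_comm]; exact le_norm_smul_add_smul ha (by rwa [norm_sub_rev]) hβ hα
    have hδv : δ ≤ ‖γ • a + δ • b‖ := le_norm_smul_add_smul hb hab hγ hδ
    calc ‖α • a + β • b - (γ • a + δ • b)‖ = ‖(α - γ) • a - (δ - β) • b‖ := by congr 1; module
      _ ≤ max (α - γ) (δ - β) := norm_smul_sub_smul_le_max ha hb hab (by linarith) (by linarith)
      _ ≤ _ := max_le_max (by linarith) (by linarith)

end Geometry

namespace SimpleGraph

variable {V : Type*} {G H T : SimpleGraph V}

lemma Reachable.of_forall_adj (h : ∀ a b, G.Adj a b → H.Reachable a b) {u v : V}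
    (huv : G.Reachable u v) : H.Reachable u v := by
  obtain ⟨p⟩ := huv
  induction p with
  | nil => rfl
  | cons hadj _ ih => exact (h _ _ hadj).trans ih

lemma Connected.reachable_or_reachable_deleteEdges (hG : G.Connected) (u v w : V) :
    (G.deleteEdges {s(u, v)}).Reachable u w ∨ (G.deleteEdges {s(u, v)}).Reachable v w := by
  classical
  obtain ⟨P, hP⟩ := hG.exists_isPath w u
  by_cases he : s(u, v) ∈ P.edges
  · have hv := P.snd_mem_support_of_mem_edges he
    have hu := Walk.endpoint_notMem_support_takeUntil hP hv (P.adj_of_mem_edges he).ne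
    have he' : s(u, v) ∉ (P.takeUntil v hv).edges :=
      fun h ↦ hu ((P.takeUntil v hv).fst_mem_support_of_mem_edges h)
    exact .inr (.symm ⟨(P.takeUntil v hv).toDeleteEdge _ he'⟩)
  · exact .inl (.symm ⟨P.toDeleteEdge _ he⟩)

lemma IsTree.not_reachable_deleteEdges_of_reachable (hT : T.IsTree) {u₁ v₁ u₂ v₂ : V}
    (h : T.Adj u₁ v₁) (hu : (T.deleteEdges {s(u₁, v₁)}).Reachable u₁ u₂)
    (hv : (T.deleteEdges {s(u₁, v₁)}).Reachable v₁ v₂) :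
    ¬(T.deleteEdges {s(u₁, v₁)}).Reachable u₂ v₂ :=
  fun h₂ ↦ isAcyclic_iff_forall_adj_isBridge.mp hT.isAcyclic h (hu.trans (h₂.trans hv.symm))

lemma IsTree.deleteEdges_sup_edge (hT : T.IsTree) {u₁ v₁ u₂ v₂ : V} (h : T.Adj u₁ v₁)
    (hu : (T.deleteEdges {s(u₁, v₁)}).Reachable u₁ u₂)
    (hv : (T.deleteEdges {s(u₁, v₁)}).Reachable v₁ v₂) :
    (T.deleteEdges {s(u₁, v₁)} ⊔ edge u₂ v₂).IsTree := by
  have hnr := hT.not_reachable_deleteEdges_of_reachable h hu hv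
  refine ⟨?_, (hT.isAcyclic.anti (deleteEdges_le _)).sup_edge_of_not_reachable hnr⟩
  have hadj : (T.deleteEdges {s(u₁, v₁)} ⊔ edge u₂ v₂).Adj u₂ v₂ :=
    .inr ((edge_adj ..).mpr ⟨.inl ⟨rfl, rfl⟩, fun h₂ ↦ hnr (h₂ ▸ .rfl)⟩)
  have h₁ : (T.deleteEdges {s(u₁, v₁)} ⊔ edge u₂ v₂).Reachable u₁ v₁ :=
    ((hu.mono le_sup_left).trans hadj.reachable).trans (hv.mono le_sup_left).symm
  have := hT.connected.nonempty
  refine .mk fun a b ↦ (hT.connected.preconnected a b).of_forall_adj fun x y hxy ↦ ?_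
  by_cases he : s(x, y) = s(u₁, v₁)
  · rcases Sym2.eq_iff.mp he with ⟨rfl, rfl⟩ | ⟨rfl, rfl⟩
    exacts [h₁, h₁.symm]
  · exact Adj.reachable (.inl (deleteEdges_adj.mpr ⟨hxy, he⟩))

lemma degree_deleteEdges_sup_edge_lt {s x u v : V} [Fintype (T.neighborSet s)]
    [Fintype ((T.deleteEdges {s(s, x)} ⊔ edge u v).neighborSet s)] (h : T.Adj s x) (hu : u ≠ s)
    (hv : v ≠ s) : (T.deleteEdges {s(s, x)} ⊔ edge u v).degree s < T.degree s := by
  classical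
  rw [← card_neighborFinset_eq_degree, ← card_neighborFinset_eq_degree]
  refine (Finset.card_le_card fun w hw ↦ ?_).trans_lt
    (Finset.card_erase_lt_of_mem (mem_neighborFinset _ _ _ |>.mpr h))
  simp only [mem_neighborFinset, sup_adj, deleteEdges_adj, edge_adj, Set.mem_singleton_iff,
    Sym2.congr_right] at hw
  simp only [Finset.mem_erase, mem_neighborFinset]
  grind

end SimpleGraph

section SpanningTrees

open SimpleGraph

variable {E : Type*} [NormedAddCommGroup E] {X : Finset E} {T : SimpleGraph {x // x ∈ X}}

lemma graphLen_sup_edge {G : SimpleGraph {x // x ∈ X}} {u v : {x // x ∈ X}} (hn : ¬G.Adj u v)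
    (h : u ≠ v) : graphLen (G ⊔ edge u v) = graphLen G + ‖(u : E) - v‖ := by
  calc graphLen (G ⊔ edge u v) = ∑ e ∈ G.edgeFinset.cons s(u, v) (by simpa), edgeLen e := by
        unfold graphLen; congr 1; ext; simp [edgeSet_edge_of_ne h, or_comm]
    _ = graphLen G + ‖(u : E) - v‖ := by rw [Finset.sum_cons, add_comm]; rfl

lemma graphLen_deleteEdges {G : SimpleGraph {x // x ∈ X}} {u v : {x // x ∈ X}} (h : G.Adj u v) :
    graphLen (G.deleteEdges {s(u, v)}) = graphLen G - ‖(u : E) - v‖ := by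
  rw [graphLen, graphLen, ← Finset.coe_singleton, edgeFinset_deleteEdges,
    Finset.sdiff_singleton_eq_erase, Finset.sum_erase_eq_sub (G.mem_edgeFinset.mpr h)]
  rfl

lemma SimpleGraph.IsTree.graphLen_deleteEdges_sup_edge (hT : T.IsTree) {u₁ v₁ u₂ v₂ : {x // x ∈ X}}
    (h : T.Adj u₁ v₁) (hu : (T.deleteEdges {s(u₁, v₁)}).Reachable u₁ u₂)
    (hv : (T.deleteEdges {s(u₁, v₁)}).Reachable v₁ v₂) :
    graphLen (T.deleteEdges {s(u₁, v₁)} ⊔ edge u₂ v₂) =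
      graphLen T - ‖(u₁ : E) - v₁‖ + ‖(u₂ : E) - v₂‖ := by
  have hnr := hT.not_reachable_deleteEdges_of_reachable h hu hv
  rw [graphLen_sup_edge (fun h₂ ↦ hnr h₂.reachable) (fun h₂ ↦ hnr (h₂ ▸ .rfl)),
    graphLen_deleteEdges h]

lemma IsMST.norm_sub_le_of_reachable_deleteEdges (hT : IsMST T) {u₁ v₁ u₂ v₂ : {x // x ∈ X}}
    (h : T.Adj u₁ v₁) (hu : (T.deleteEdges {s(u₁, v₁)}).Reachable u₁ u₂)
    (hv : (T.deleteEdges {s(u₁, v₁)}).Reachable v₁ v₂) :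
    ‖(u₁ : E) - v₁‖ ≤ ‖(u₂ : E) - v₂‖ := by
  have := hT.2 _ (hT.1.deleteEdges_sup_edge h hu hv)
  rw [hT.1.graphLen_deleteEdges_sup_edge h hu hv] at this
  linarith

lemma IsMST.deleteEdges_sup_edge (hT : IsMST T) {u₁ v₁ u₂ v₂ : {x // x ∈ X}}
    (h : T.Adj u₁ v₁) (hu : (T.deleteEdges {s(u₁, v₁)}).Reachable u₁ u₂)
    (hv : (T.deleteEdges {s(u₁, v₁)}).Reachable v₁ v₂) (hle : ‖(u₂ : E) - v₂‖ ≤ ‖(u₁ : E) - v₁‖) :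
    IsMST (T.deleteEdges {s(u₁, v₁)} ⊔ edge u₂ v₂) := by
  refine ⟨hT.1.deleteEdges_sup_edge h hu hv, fun G hG ↦ ?_⟩
  rw [hT.1.graphLen_deleteEdges_sup_edge h hu hv]
  linarith [hT.2 G hG]

lemma exists_isMST (hX : X.Nonempty) : ∃ T : SimpleGraph {x // x ∈ X}, IsMST T := by
  have : Nonempty {x // x ∈ X} := hX.to_subtype
  obtain ⟨T₀, -, hT₀⟩ := (connected_top (V := {x // x ∈ X})).exists_isTree_le
  obtain ⟨T, hT, hmin⟩ := Finset.exists_min_image {G | G.IsTree} graphLen ⟨T₀, by simpa⟩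
  exact ⟨T, by simpa using hT, fun G hG ↦ hmin G (by simpa)⟩

lemma exists_isMST_forall_degree_le (v : {x // x ∈ X}) :
    ∃ T : SimpleGraph {x // x ∈ X}, IsMST T ∧ ∀ T', IsMST T' → T.degree v ≤ T'.degree v := by
  obtain ⟨T₀, hT₀⟩ := exists_isMST ⟨_, v.2⟩
  obtain ⟨T, hT, hmin⟩ := Finset.exists_min_image {G | IsMST G} (·.degree v) ⟨T₀, by simpa⟩
  exact ⟨T, by simpa using hT, fun G hG ↦ hmin G (by simpa)⟩

-- Otherwise exchanging `vx` for `zx` gives a minimum spanning tree of smaller degree at `v`.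
lemma IsMST.norm_sub_lt_of_forall_degree_le (hT : IsMST T) {v x z : {x // x ∈ X}}
    (hmin : ∀ T', IsMST T' → T.degree v ≤ T'.degree v) (hx : T.Adj v x) (hz : z ≠ v)
    (hvz : (T.deleteEdges {s(v, x)}).Reachable v z) : ‖(x : E) - v‖ < ‖(z : E) - x‖ := by
  by_contra! hle
  have hT' := hT.deleteEdges_sup_edge hx hvz .rfl (by rwa [norm_sub_rev (v : E)])
  -- `convert` reconciles the classical `DecidableRel` instance in `hmin` with the structural one.
  exact Nat.not_lt.mpr (hmin _ hT') (by convert degree_deleteEdges_sup_edge_lt hx hz hx.ne.symm)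

end SpanningTrees

theorem exists_mst_neighbours_in_cones_general
    {E : Type*} [NormedAddCommGroup E] [NormedSpace ℝ E]
    (y : ZMod 6 → E)
    (hy₁ : ∀ i, ‖y i‖ = 1)
    (hy₂ : ∀ i, ‖y (i + 1) - y i‖ = 1)
    (X : Finset E) (s : E) (hs : s ∉ X) :
    ∃ T : SimpleGraph {x // x ∈ insert s X}, IsMST T ∧
      ∀ i : ZMod 6,
        (∀ x x' : {x // x ∈ insert s X},
          T.Adj ⟨s, Finset.mem_insert_self s X⟩ x →
          T.Adj ⟨s, Finset.mem_insert_self s X⟩ x' →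
          (x : E) ∈ X → (x' : E) ∈ X →
          (x : E) - s ∈ cone (y i) (y (i + 1)) →
          (x' : E) - s ∈ cone (y i) (y (i + 1)) → x = x') ∧
        (∀ x : {x // x ∈ insert s X},
          T.Adj ⟨s, Finset.mem_insert_self s X⟩ x →
          (x : E) ∈ X → (x : E) - s ∈ cone (y i) (y (i + 1)) →
          ∀ x' ∈ X, x' - s ∈ cone (y i) (y (i + 1)) →
            ‖(x : E) - s‖ ≤ ‖x' - s‖) := by
  set s₀ : {x // x ∈ insert s X} := ⟨s, Finset.mem_insert_self s X⟩
  obtain ⟨T, hT, hmin⟩ := exists_isMST_forall_degree_le s₀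
  have hgeo {i : ZMod 6} {x x' : E} (hx : x - s ∈ cone (y i) (y (i + 1)))
      (hx' : x' - s ∈ cone (y i) (y (i + 1))) : ‖x - x'‖ ≤ max ‖x - s‖ ‖x' - s‖ := by
    simpa using norm_sub_le_max_of_mem_cone (hy₁ i) (hy₁ (i + 1)) (hy₂ i) hx hx'
  refine ⟨T, hT, fun i ↦ ⟨fun x x' hx hx' hxX hx'X hcx hcx' ↦ ?_, fun x hx _ hcx x' hx'X hcx' ↦ ?_⟩⟩
  · by_contra hne
    wlog hle : ‖(x : E) - s‖ ≤ ‖(x' : E) - s‖ generalizing x x'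
    · exact this x' x hx' hx hx'X hxX hcx' hcx (Ne.symm hne) (le_of_not_ge hle)
    have hreach : (T.deleteEdges {s(s₀, x')}).Reachable s₀ x :=
      (SimpleGraph.deleteEdges_adj.mpr ⟨hx, fun h ↦ hne (Sym2.congr_right.mp h)⟩).reachable
    have hxx' := max_eq_right hle ▸ hgeo hcx hcx'
    have := hT.norm_sub_lt_of_forall_degree_le hmin hx' hx.ne.symm hreach
    linarith
  · by_contra! hlt
    have hx's : (⟨x', Finset.mem_insert_of_mem hx'X⟩ : {x // x ∈ insert s X}) ≠ s₀ :=
      fun h ↦ hs (by rw [← show x' = s from congrArg Subtype.val h]; exact hx'X)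
    have hxx' := max_eq_left hlt.le ▸ hgeo hcx hcx'
    rcases hT.1.connected.reachable_or_reachable_deleteEdges s₀ x ⟨x', _⟩ with h | h
    · have : ‖(x : E) - s‖ < ‖x' - x‖ := hT.norm_sub_lt_of_forall_degree_le hmin hx hx's h
      linarith [norm_sub_rev x' (x : E)]
    · have : ‖s - (x : E)‖ ≤ ‖s - x'‖ := hT.norm_sub_le_of_reachable_deleteEdges hx .rfl h
      linarith [norm_sub_rev s (x : E), norm_sub_rev s x']

/-- Lemma 4 of the paper: given the hexagon points `y₀, …, y₅` of Lemma 2, a finite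
nonempty terminal set `X` and a point `s ∉ X`, there is a minimum spanning tree `T` on
`X ∪ {s}` such that, for each of the six cones, at most one terminal adjacent to `s` in
`T` lies in that cone (relative to `s`), and such a terminal is closest to `s` among all
terminals in that cone. -/
theorem exists_mst_neighbours_in_cones
    {E : Type*} [NormedAddCommGroup E] [NormedSpace ℝ E]
    (hdim : Module.finrank ℝ E = 2)
    (y : ZMod 6 → E)
    (hy₁ : ∀ i, ‖y i‖ = 1)
    (hy₂ : ∀ i, ‖y (i + 1) - y i‖ = 1)
    (hy₃ : ∀ i, y (i + 3) = -y i)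
    (hy₄ : ∀ v : E, ∃ i, v ∈ cone (y i) (y (i + 1)))
    (X : Finset E) (hX : X.Nonempty) (s : E) (hs : s ∉ X) :
    ∃ T : SimpleGraph {x // x ∈ insert s X}, IsMST T ∧
      ∀ i : ZMod 6,
        (∀ x x' : {x // x ∈ insert s X},
          T.Adj ⟨s, Finset.mem_insert_self s X⟩ x →
          T.Adj ⟨s, Finset.mem_insert_self s X⟩ x' →
          (x : E) ∈ X → (x' : E) ∈ X →
          (x : E) - s ∈ cone (y i) (y (i + 1)) →
          (x' : E) - s ∈ cone (y i) (y (i + 1)) → x = x') ∧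
        (∀ x : {x // x ∈ insert s X},
          T.Adj ⟨s, Finset.mem_insert_self s X⟩ x →
          (x : E) ∈ X → (x : E) - s ∈ cone (y i) (y (i + 1)) →
          ∀ x' ∈ X, x' - s ∈ cone (y i) (y (i + 1)) →
            ‖(x : E) - s‖ ≤ ‖x' - s‖) :=
  exists_mst_neighbours_in_cones_general y hy₁ hy₂ X s hs
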